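/- In the traffic-intersection ARS, the set of fair derivations—those in which every car arriving at the intersection eventually crosses—is not a closed set of derivations, and hence is not the extension of any intensional strategy. -/

import Mathlib

/-- A derivation over objects `O` and labels `L`: a partial function on ℕ whose
domain is an initial segment, with composable consecutive steps. -/
structure Deriv (O L : Type) where
  step : ℕ → Option (O × L × O)
  initial : ∀ i, step (i + 1) ≠ none → step i ≠ none
  comp : ∀ i s t, step i = some s → step (i + 1) = some t → t.1 = s.2.2

namespace Deriv
/-- Non-empty derivation. -/
def NE {O L : Type} (π : Deriv O L) : Prop := π.step 0 ≠ none
/-- Finite derivation. -/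
def Finite {O L : Type} (π : Deriv O L) : Prop := ∃ n, π.step n = none
/-- Derivation over the set of steps `Γ` of an ARS. -/
def Over {O L : Type} (Γ : Set (O × L × O)) (π : Deriv O L) : Prop :=
  ∀ i s, π.step i = some s → s ∈ Γ
end Deriv

/-- `π₀` is a prefix of `π`. -/
def DPrefix {O L : Type} (π₀ π : Deriv O L) : Prop :=
  ∀ i s, π₀.step i = some s → π.step i = some s

/-- History (trace) of the first `j` steps of a derivation. -/
def histD {O L : Type} (π : Deriv O L) (j : ℕ) : List (O × L) :=
  (List.range j).filterMap fun i => (π.step i).map fun s => (s.1, s.2.1)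

/-- Extension of an intensional strategy with memory. -/
def ExtOf {O L : Type} (lam : List (O × L) → O → Set (O × L × O)) : Set (Deriv O L) :=
  {π | π.NE ∧ ∀ j s, π.step j = some s → s ∈ lam (histD π j) s.1}

/-- Extension of a memoryless intensional strategy. -/
def MExtOf {O L : Type} (lam : O → Set (O × L × O)) : Set (Deriv O L) :=
  {π | π.NE ∧ ∀ j s, π.step j = some s → s ∈ lam s.1}

/-- Well-formedness of an intensional strategy with memory over the ARS `Γ`:
every chosen step has the current object as source and belongs to `Γ`. -/
def WfStrat {O L : Type} (Γ : Set (O × L × O))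
    (lam : List (O × L) → O → Set (O × L × O)) : Prop :=
  ∀ α a s, s ∈ lam α a → s.1 = a ∧ s ∈ Γ

/-- Well-formedness of a memoryless intensional strategy. -/
def MWfStrat {O L : Type} (Γ : Set (O × L × O)) (lam : O → Set (O × L × O)) : Prop :=
  ∀ a s, s ∈ lam a → s.1 = a ∧ s ∈ Γ

/-- `Γ` is a functional relation. -/
def FunctionalARS {O L : Type} (Γ : Set (O × L × O)) : Prop :=
  ∀ a φ b₁ b₂, (a, φ, b₁) ∈ Γ → (a, φ, b₂) ∈ Γ → b₁ = b₂

/-- `π` is a limit point of `ζ`: every finite non-empty prefix of `π` is a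
prefix of some member of `ζ`. -/
def LimPt {O L : Type} (ζ : Set (Deriv O L)) (π : Deriv O L) : Prop :=
  π.NE ∧ ∀ π₀ : Deriv O L, π₀.Finite → π₀.NE → DPrefix π₀ π → ∃ π' ∈ ζ, DPrefix π₀ π'

/-- `ζ` is closed: it contains all its limit points. -/
def ClosedStrat {O L : Type} (ζ : Set (Deriv O L)) : Prop :=
  ∀ π, LimPt ζ π → π ∈ ζ

/-- `ζ` is closed under non-empty prefixes. -/
def PrefClosed {O L : Type} (ζ : Set (Deriv O L)) : Prop :=
  ∀ π ∈ ζ, ∀ π₀ : Deriv O L, π₀.NE → DPrefix π₀ π → π₀ ∈ ζ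

/-- Objects of the traffic ARS: (queue 1, light 1, queue 2, light 2). -/
abbrev TObj : Type := ℕ × Bool × ℕ × Bool

inductive TLab : Type | car1 | car2 | sig1 | sig2 | cross1 | cross2

/-- Steps of the traffic-intersection ARS. -/
def TGam : Set (TObj × TLab × TObj) :=
  {t | ∃ q1 l1 q2 l2,
    t = ((q1, l1, q2, l2), TLab.car1, (q1 + 1, l1, q2, l2)) ∨
    t = ((q1, l1, q2, l2), TLab.car2, (q1, l1, q2 + 1, l2)) ∨
    t = ((q1, l1, q2, l2), TLab.sig1, (q1, !l1, q2, l2)) ∨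
    t = ((q1, l1, q2, l2), TLab.sig2, (q1, l1, q2, !l2)) ∨
    t = ((q1 + 1, true, q2, l2), TLab.cross1, (q1, true, q2, l2)) ∨
    t = ((q1, l1, q2 + 1, true), TLab.cross2, (q1, l1, q2, true))}

/-- Both signals are green. -/
def BothGreen (o : TObj) : Prop := o.2.1 = true ∧ o.2.2.2 = true

/-- A derivation is fair if every car arriving at the intersection eventually
crosses: whenever queue j is non-empty at some position, a later step has label
crossⱼ. -/
def Fair (π : Deriv TObj TLab) : Prop :=
  (∀ i s, π.step i = some s → 0 < s.1.1 →
    ∃ k, i ≤ k ∧ ∃ t, π.step k = some t ∧ t.2.1 = TLab.cross1) ∧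
  (∀ i s, π.step i = some s → 0 < s.1.2.2.1 →
    ∃ k, i ≤ k ∧ ∃ t, π.step k = some t ∧ t.2.1 = TLab.cross2)

/-- The set of fair derivations of the traffic ARS. -/
def zetaFair : Set (Deriv TObj TLab) :=
  {π | π.NE ∧ π.Over TGam ∧ Fair π}

/-!
The extension of a strategy is decided step by step, each step looking only at the finite
history before it, so extensions are closed. The fair derivations are not: while light 1 stays
red, car 2 may cross and a new car 2 arrive forever, which starves car 1; yet every finite
prefix of this loop, stopped after a `cross₂`, extends to a fair derivation by switching light 1
and letting car 1 cross.
-/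

namespace Deriv

variable {O L : Type}

theorem step_ne_none_of_le (π : Deriv O L) {i j : ℕ} (hij : i ≤ j) (hj : π.step j ≠ none) :
    π.step i ≠ none := by
  induction j, hij using Nat.le_induction with
  | base => exact hj
  | succ n _ ih => exact ih (π.initial n hj)

def truncate (π : Deriv O L) (n : ℕ) : Deriv O L where
  step i := if i < n then π.step i else none
  initial i h := by
    by_cases hi : i + 1 < n
    · rw [if_pos hi] at h
      rw [if_pos (by omega)]
      exact π.initial i h
    · simp [if_neg hi] at h
  comp i s t hs ht := by
    by_cases hi : i + 1 < n
    · rw [if_pos hi] at ht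
      rw [if_pos (by omega)] at hs
      exact π.comp i s t hs ht
    · simp [if_neg hi] at ht

theorem truncate_step (π : Deriv O L) (n i : ℕ) :
    (π.truncate n).step i = if i < n then π.step i else none := rfl

theorem truncate_finite (π : Deriv O L) (n : ℕ) : (π.truncate n).Finite :=
  ⟨n, by simp [truncate_step]⟩

theorem NE.truncate {π : Deriv O L} (hπ : π.NE) {n : ℕ} (hn : 0 < n) : (π.truncate n).NE := by
  simpa [Deriv.NE, truncate_step, hn] using hπ

theorem truncate_prefix (π : Deriv O L) (n : ℕ) : DPrefix (π.truncate n) π := by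
  intro i s hs
  rw [truncate_step] at hs
  split at hs
  · exact hs
  · simp at hs

def ofPath (obj : ℕ → O) (lab : ℕ → L) (len : ℕ∞) : Deriv O L where
  step i := if (i : ℕ∞) < len then some (obj i, lab i, obj (i + 1)) else none
  initial i h := by
    have hi : ((i + 1 : ℕ) : ℕ∞) < len := by
      by_contra hi
      exact h (if_neg hi)
    rw [if_pos (lt_of_le_of_lt (by exact_mod_cast i.le_succ) hi)]
    simp
  comp i s t hs ht := by
    split at hs <;> split at ht <;> cases hs <;> cases ht
    rfl

theorem ofPath_step (obj : ℕ → O) (lab : ℕ → L) (len : ℕ∞) (i : ℕ) :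
    (ofPath obj lab len).step i =
      if (i : ℕ∞) < len then some (obj i, lab i, obj (i + 1)) else none := rfl

theorem ofPath_step_eq_some {obj : ℕ → O} {lab : ℕ → L} {len : ℕ∞} {i : ℕ}
    {s : O × L × O} :
    (ofPath obj lab len).step i = some s ↔
      (i : ℕ∞) < len ∧ s = (obj i, lab i, obj (i + 1)) := by
  rw [ofPath_step]
  split <;> simp [*, eq_comm]

theorem ofPath_ne {obj : ℕ → O} {lab : ℕ → L} {len : ℕ∞} (hlen : 0 < len) :
    (ofPath obj lab len).NE := by
  simp [Deriv.NE, ofPath_step, hlen]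

theorem ofPath_over {Γ : Set (O × L × O)} {obj : ℕ → O} {lab : ℕ → L} {len : ℕ∞}
    (h : ∀ i : ℕ, (i : ℕ∞) < len → (obj i, lab i, obj (i + 1)) ∈ Γ) :
    (ofPath obj lab len).Over Γ := by
  intro i s hs
  obtain ⟨hi, rfl⟩ := ofPath_step_eq_some.mp hs
  exact h i hi

end Deriv

theorem DPrefix.step_eq_of_le {O L : Type} {π₀ π : Deriv O L} (h : DPrefix π₀ π) {i j : ℕ}
    (hij : i ≤ j) (hj : π₀.step j ≠ none) : π.step i = π₀.step i := by
  obtain ⟨s, hs⟩ := Option.ne_none_iff_exists'.mp (π₀.step_ne_none_of_le hij hj)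
  rw [hs, h i s hs]

theorem histD_congr {O L : Type} {π π' : Deriv O L} {j : ℕ}
    (h : ∀ i < j, π.step i = π'.step i) : histD π j = histD π' j :=
  List.filterMap_congr fun i hi => by rw [h i (List.mem_range.mp hi)]

theorem closedStrat_extOf {O L : Type} (lam : List (O × L) → O → Set (O × L × O)) :
    ClosedStrat (ExtOf lam) := by
  rintro π ⟨hne, hlim⟩
  refine ⟨hne, fun j s hs => ?_⟩
  have hj : (π.truncate (j + 1)).step j ≠ none := by simp [Deriv.truncate_step, hs]
  obtain ⟨π', ⟨-, hπ'⟩, hpre⟩ := hlim (π.truncate (j + 1)) (π.truncate_finite _)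
    (hne.truncate j.succ_pos) (π.truncate_prefix _)
  have hagree : ∀ i ≤ j, π'.step i = π.step i := fun i hi => by
    rw [hpre.step_eq_of_le hi hj, Deriv.truncate_step, if_pos (by omega)]
  have hmem := hπ' j s (by rw [hagree j le_rfl, hs])
  rwa [histD_congr fun i hi => hagree i hi.le] at hmem

namespace Traffic

def loopObj (i : ℕ) : TObj := (1, false, (i + 1) % 2, true)

def loopLab (i : ℕ) : TLab := if i % 2 = 0 then .cross2 else .car2

/-- `[1,0,1,1] →cross₂ [1,0,0,1] →car₂ [1,0,1,1] → ⋯` -/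
def unfairLoop : Deriv TObj TLab := Deriv.ofPath loopObj loopLab ⊤

def completionObj (n i : ℕ) : TObj :=
  if i ≤ 2 * n + 1 then loopObj i
  else if i = 2 * n + 2 then (1, true, 0, true) else (0, true, 0, true)

def completionLab (n i : ℕ) : TLab :=
  if i ≤ 2 * n then loopLab i else if i = 2 * n + 1 then .sig1 else .cross1

/-- Follows `unfairLoop` for `2n + 1` steps, ending in `[1,0,0,1]`, then plays `signal₁`
and `cross₁`. -/
def fairCompletion (n : ℕ) : Deriv TObj TLab :=
  Deriv.ofPath (completionObj n) (completionLab n) (2 * n + 3 : ℕ)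

theorem loop_step_mem_TGam (i : ℕ) : (loopObj i, loopLab i, loopObj (i + 1)) ∈ TGam := by
  rcases Nat.mod_two_eq_zero_or_one i with h | h <;>
    exact ⟨1, false, 0, true, by simp [loopObj, loopLab, h, Nat.add_mod]⟩

theorem fairCompletion_step_of_le {n i : ℕ} (hi : i ≤ 2 * n) :
    (fairCompletion n).step i = unfairLoop.step i := by
  have hlt : (i : ℕ∞) < ((2 * n + 3 : ℕ) : ℕ∞) := Nat.cast_lt.mpr (by omega)
  simp only [fairCompletion, unfairLoop, Deriv.ofPath_step, if_pos hlt,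
    if_pos (ENat.natCast_lt_top i), completionObj, completionLab, if_pos hi,
    if_pos (by omega : i ≤ 2 * n + 1), if_pos (by omega : i + 1 ≤ 2 * n + 1)]

theorem fairCompletion_over (n : ℕ) : (fairCompletion n).Over TGam := by
  refine Deriv.ofPath_over fun i hi => ?_
  have hi : i < 2 * n + 3 := by exact_mod_cast hi
  rcases (by omega : i ≤ 2 * n ∨ i = 2 * n + 1 ∨ i = 2 * n + 2) with hi | rfl | rfl
  · simpa [completionObj, completionLab, hi, (by omega : i ≤ 2 * n + 1),
      (by omega : i + 1 ≤ 2 * n + 1)] using loop_step_mem_TGam i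
  · exact ⟨1, false, 0, true, by simp [completionObj, completionLab, loopObj, Nat.add_mod]⟩
  · exact ⟨0, true, 0, true, by simp [completionObj, completionLab]⟩

theorem fair_fairCompletion (n : ℕ) : Fair (fairCompletion n) := by
  constructor
  · intro i s hs _
    obtain ⟨hi, -⟩ := Deriv.ofPath_step_eq_some.mp hs
    have hi : i < 2 * n + 3 := Nat.cast_lt.mp hi
    refine ⟨2 * n + 2, by omega, _,
      Deriv.ofPath_step_eq_some.mpr ⟨Nat.cast_lt.mpr (by omega), rfl⟩, ?_⟩
    simp [completionLab]
  · intro i s hs hq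
    obtain ⟨hi, rfl⟩ := Deriv.ofPath_step_eq_some.mp hs
    have hi : i < 2 * n + 3 := Nat.cast_lt.mp hi
    have hie : i ≤ 2 * n ∧ i % 2 = 0 := by
      simp only [completionObj, loopObj] at hq
      split_ifs at hq <;> simp at hq; omega
    refine ⟨i, le_rfl, _, Deriv.ofPath_step_eq_some.mpr ⟨Nat.cast_lt.mpr hi, rfl⟩, ?_⟩
    simp [completionLab, loopLab, hie]

theorem fairCompletion_mem_zetaFair (n : ℕ) : fairCompletion n ∈ zetaFair :=
  ⟨Deriv.ofPath_ne (by simp), fairCompletion_over n, fair_fairCompletion n⟩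

theorem unfairLoop_limPt : LimPt zetaFair unfairLoop := by
  refine ⟨Deriv.ofPath_ne (by simp), fun π₀ ⟨n, hn⟩ _ hpre =>
    ⟨fairCompletion n, fairCompletion_mem_zetaFair n, fun i s hs => ?_⟩⟩
  have hin : i < n := by
    by_contra! hni
    exact π₀.step_ne_none_of_le hni (by simp [hs]) hn
  rw [fairCompletion_step_of_le (by omega)]
  exact hpre i s hs

theorem unfairLoop_not_fair : ¬ Fair unfairLoop := by
  rintro ⟨hfair₁, -⟩
  obtain ⟨k, -, t, ht, hlab⟩ :=
    hfair₁ 0 _ (Deriv.ofPath_step_eq_some.mpr ⟨by simp, rfl⟩) (by simp [loopObj])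
  obtain ⟨-, rfl⟩ := Deriv.ofPath_step_eq_some.mp ht
  simp only [loopLab] at hlab
  split at hlab <;> cases hlab

theorem zetaFair_not_closedStrat : ¬ ClosedStrat zetaFair :=
  fun h => unfairLoop_not_fair (h unfairLoop unfairLoop_limPt).2.2

end Traffic

/-- the set of fair derivations of the traffic ARS is not closed,
and hence is not the extension of any intensional strategy. -/
theorem fair_not_closed_not_extension :
    ¬ ClosedStrat zetaFair ∧ ¬ ∃ lam, WfStrat TGam lam ∧ ExtOf lam = zetaFair := by
  refine ⟨Traffic.zetaFair_not_closedStrat, ?_⟩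
  rintro ⟨lam, -, hext⟩
  exact Traffic.zetaFair_not_closedStrat (hext ▸ closedStrat_extOf lam)
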